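/- With the generic wreath-composition setup below, there exists a constant C₁ > 0, depending only on K and n⃗, such that for all Y ≥ 1, all α ∈ 𝔛(O_K;Y), and all j ∈ [1,k], one has ‖F_{j,α}‖ ≤ C₁·Y. In particular ‖F_α‖ ≤ C₁·Y. -/

import Mathlib

open scoped NumberField Polynomial

/-- The house `‖z‖` of an algebraic number `z`: the maximum of `|σ(z)|` over the complex
embeddings `σ` of any number field containing `z`; equivalently, the maximum of the absolute
values of the complex roots of the minimal polynomial of `z` over `ℚ`. -/
noncomputable def algHouse {F : Type*} [Field F] [CharZero F] (z : F) : ℝ :=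
  sSup (Set.range fun w : ((minpoly ℚ z).rootSet ℂ) => ‖(w : ℂ)‖)

/-- The height `‖f‖ := max_{1 ≤ i ≤ n} ‖a_i‖^(1/i)` of a monic polynomial
`f(x) = xⁿ + a₁ x^(n-1) + ⋯ + aₙ`, where `aᵢ = f.coeff (n - i)`. -/
noncomputable def polyHouse {F : Type*} [Field F] [CharZero F] (f : Polynomial F) : ℝ :=
  sSup {r : ℝ | ∃ i ∈ Finset.Icc 1 f.natDegree,
    r = algHouse (f.coeff (f.natDegree - i)) ^ ((i : ℝ)⁻¹)}

/-- The polynomial ring `A = O_K[T_{u,v}]` (with an `ℕ × ℕ`-indexed supply of variables;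
only the variables `T_{u,v}` with `1 ≤ u ≤ k`, `1 ≤ v ≤ n_u` are used). -/
abbrev WreathCompRing (K : Type*) [Field K] [NumberField K] :=
  MvPolynomial (ℕ × ℕ) (𝓞 K)

/-- The generic polynomial `g_u(x) = x^(n_u) + Σ_{v=1}^{n_u} T_{u,v} x^(n_u - v)`. -/
noncomputable def wreathGen (K : Type*) [Field K] [NumberField K] (n : ℕ → ℕ) (u : ℕ) :
    Polynomial (WreathCompRing K) :=
  Polynomial.X ^ (n u) +
    ∑ v ∈ Finset.Icc 1 (n u), Polynomial.C (MvPolynomial.X (u, v)) * Polynomial.X ^ (n u - v)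

/-- The iterated composition `F_j = g_j(F_{j-1}(x))`, with `F_0 = x` (so `F_1 = g_1`). -/
noncomputable def wreathComp (K : Type*) [Field K] [NumberField K] (n : ℕ → ℕ) :
    ℕ → Polynomial (WreathCompRing K)
  | 0 => Polynomial.X
  | (j + 1) => (wreathGen K n (j + 1)).comp (wreathComp K n j)

/-- `N_j := n₁ ⋯ n_j`, with `N_0 = 1`. -/
def wreathDeg (n : ℕ → ℕ) (j : ℕ) : ℕ := ∏ v ∈ Finset.Icc 1 j, n v

/-- The specialization `F_{j,α} ∈ O_K[x]` of `F_j` under `Φ_α : T_{u,v} ↦ α_{u,v}`. -/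
noncomputable def wreathSpec (K : Type*) [Field K] [NumberField K] (n : ℕ → ℕ)
    (α : ℕ × ℕ → 𝓞 K) (j : ℕ) : Polynomial (𝓞 K) :=
  (wreathComp K n j).map (MvPolynomial.eval α)

/-- The specialization `F_{j,α}`, viewed as a polynomial with coefficients in `K`. -/
noncomputable def wreathSpecK (K : Type*) [Field K] [NumberField K] (n : ℕ → ℕ)
    (α : ℕ × ℕ → 𝓞 K) (j : ℕ) : Polynomial K :=
  (wreathSpec K n α j).map (algebraMap (𝓞 K) K)

/-- The box `𝔛(O_K; Y)`: vectors `α = (α_{u,v})_{1 ≤ u ≤ k, 1 ≤ v ≤ n_u}` of integers of `K`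
with `‖α_{u,v}‖ ≤ Y^(v·N_{u-1})` (coordinates outside the index range are set to `0`). -/
def wreathBox (K : Type*) [Field K] [NumberField K] (k : ℕ) (n : ℕ → ℕ) (Y : ℝ) :
    Set (ℕ × ℕ → 𝓞 K) :=
  {α | (∀ u ∈ Finset.Icc 1 k, ∀ v ∈ Finset.Icc 1 (n u),
          algHouse ((α (u, v) : K)) ≤ Y ^ (v * wreathDeg n (u - 1))) ∧
        ∀ u v : ℕ, (u ∉ Finset.Icc 1 k ∨ v ∉ Finset.Icc 1 (n u)) → α (u, v) = 0}

section HouseBasics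
set_option linter.unusedSectionVars false

variable {K : Type*} [Field K] [NumberField K]
open NumberField

lemma algHouse_eq_house (z : K) : algHouse z = house z := by
  have h1 : (Set.range fun w : ((minpoly ℚ z).rootSet ℂ) => ‖(w : ℂ)‖)
      = Set.range fun φ : K →+* ℂ => ‖φ z‖ := by
    rw [show (Set.range fun w : ((minpoly ℚ z).rootSet ℂ) => ‖(w : ℂ)‖)
        = (fun x : ℂ => ‖x‖) '' ((minpoly ℚ z).rootSet ℂ) from (Set.image_eq_range _ _).symm,
      ← NumberField.Embeddings.range_eval_eq_rootSet_minpoly K ℂ z, ← Set.range_comp]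
    simp [Function.comp_def]
  rw [algHouse, h1]
  have hh : house z = ‖canonicalEmbedding K z‖ := rfl
  refine le_antisymm (Real.sSup_le ?_ (house_nonneg z)) ?_
  · rintro r ⟨φ, rfl⟩
    rw [hh]
    exact (NumberField.canonicalEmbedding.norm_le_iff z _).mp le_rfl φ
  · rw [hh, NumberField.canonicalEmbedding.norm_le_iff]
    intro φ
    exact le_csSup (Set.Finite.bddAbove (Set.finite_range _)) ⟨φ, rfl⟩

lemma house_zero : house (0 : K) = 0 := by
  simp [house, map_zero]

lemma house_one : house (1 : K) = 1 := by
  simpa using NumberField.house_intCast (K := K) 1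

lemma house_add_le (x y : K) : house (x + y) ≤ house x + house y := by
  simp only [house, map_add]
  exact norm_add_le _ _

end HouseBasics

section HB
set_option linter.unusedSectionVars false

variable {K : Type*} [Field K] [NumberField K]
open NumberField Polynomial Finset


/-- `f` has coefficients bounded by `C·Y^(N-d)` and vanishing above degree `N`. -/
def HB (C Y : ℝ) (N : ℕ) (f : K[X]) : Prop :=
  (∀ d, N < d → f.coeff d = 0) ∧ ∀ d, d ≤ N → house (f.coeff d) ≤ C * Y ^ (N - d)

lemma HB.mono {C C' Y : ℝ} {N : ℕ} {f : K[X]} (h : HB C Y N f) (hCC : C ≤ C')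
    (hY : 0 ≤ Y) : HB C' Y N f :=
  ⟨h.1, fun d hd => (h.2 d hd).trans (mul_le_mul_of_nonneg_right hCC (pow_nonneg hY _))⟩

lemma hb_zero {Y : ℝ} {N : ℕ} : HB (K := K) 0 Y N 0 :=
  ⟨fun _ _ => rfl, fun d _ => by simp [house_zero]⟩

lemma hb_one {Y : ℝ} : HB (K := K) 1 Y 0 1 := by
  refine ⟨fun d hd => ?_, fun d hd => ?_⟩
  · rw [Polynomial.coeff_one, if_neg (by omega)]
  · interval_cases d
    simp [house_one]

lemma hb_add {C₁ C₂ Y : ℝ} {N : ℕ} {f g : K[X]} (h1 : HB C₁ Y N f) (h2 : HB C₂ Y N g) :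
    HB (C₁ + C₂) Y N (f + g) := by
  refine ⟨fun d hd => by simp [h1.1 d hd, h2.1 d hd], fun d hd => ?_⟩
  rw [Polynomial.coeff_add]
  calc house (f.coeff d + g.coeff d) ≤ house (f.coeff d) + house (g.coeff d) :=
        _root_.house_add_le _ _
    _ ≤ C₁ * Y ^ (N - d) + C₂ * Y ^ (N - d) := add_le_add (h1.2 d hd) (h2.2 d hd)
    _ = (C₁ + C₂) * Y ^ (N - d) := (add_mul _ _ _).symm

lemma hb_sum {ι : Type*} {Y : ℝ} {N : ℕ} (s : Finset ι) (Cf : ι → ℝ) (f : ι → K[X])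
    (h : ∀ i ∈ s, HB (Cf i) Y N (f i)) :
    HB (∑ i ∈ s, Cf i) Y N (∑ i ∈ s, f i) := by
  induction s using Finset.cons_induction with
  | empty => simpa using hb_zero
  | cons a s ha ih =>
    rw [Finset.sum_cons, Finset.sum_cons]
    exact hb_add (h a (Finset.mem_cons_self a s)) (ih fun i hi => h i (Finset.mem_cons_of_mem hi))

lemma hb_mul {C₁ C₂ Y : ℝ} {N₁ N₂ : ℕ} {f g : K[X]} (hY : 1 ≤ Y) (hC₁ : 0 ≤ C₁)
    (hC₂ : 0 ≤ C₂) (h1 : HB C₁ Y N₁ f) (h2 : HB C₂ Y N₂ g) :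
    HB (((N₁ + N₂ + 1 : ℕ) : ℝ) * (C₁ * C₂)) Y (N₁ + N₂) (f * g) := by
  have hY0 : (0:ℝ) ≤ Y := le_trans zero_le_one hY
  constructor
  · intro d hd
    rw [Polynomial.coeff_mul]
    refine Finset.sum_eq_zero fun x hx => ?_
    have hxd := Finset.HasAntidiagonal.mem_antidiagonal.mp hx
    rcases (by omega : N₁ < x.1 ∨ N₂ < x.2) with h | h
    · rw [h1.1 _ h, zero_mul]
    · rw [h2.1 _ h, mul_zero]
  · intro d hd
    rw [Polynomial.coeff_mul]
    have key : ∀ x ∈ Finset.HasAntidiagonal.antidiagonal d,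
        house (f.coeff x.1 * g.coeff x.2) ≤ C₁ * C₂ * Y ^ (N₁ + N₂ - d) := by
      intro x hx
      have hxd := Finset.HasAntidiagonal.mem_antidiagonal.mp hx
      by_cases hx1 : x.1 ≤ N₁
      · by_cases hx2 : x.2 ≤ N₂
        · calc house (f.coeff x.1 * g.coeff x.2)
              ≤ house (f.coeff x.1) * house (g.coeff x.2) := house_mul_le _ _
            _ ≤ (C₁ * Y ^ (N₁ - x.1)) * (C₂ * Y ^ (N₂ - x.2)) :=
                mul_le_mul (h1.2 _ hx1) (h2.2 _ hx2) (house_nonneg _)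
                  (by positivity)
            _ = C₁ * C₂ * (Y ^ (N₁ - x.1) * Y ^ (N₂ - x.2)) := by ring
            _ = C₁ * C₂ * Y ^ (N₁ + N₂ - d) := by
                rw [← pow_add, show N₁ - x.1 + (N₂ - x.2) = N₁ + N₂ - d from by omega]
        · rw [h2.1 _ (by omega), mul_zero, house_zero]
          positivity
      · rw [h1.1 _ (by omega), zero_mul, house_zero]
        positivity
    calc house (∑ x ∈ Finset.HasAntidiagonal.antidiagonal d, f.coeff x.1 * g.coeff x.2)
        ≤ ∑ x ∈ Finset.HasAntidiagonal.antidiagonal d, house (f.coeff x.1 * g.coeff x.2) :=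
          house_sum_le_sum_house _ _
      _ ≤ ∑ _x ∈ Finset.HasAntidiagonal.antidiagonal d, C₁ * C₂ * Y ^ (N₁ + N₂ - d) :=
          Finset.sum_le_sum key
      _ = ((d + 1 : ℕ) : ℝ) * (C₁ * C₂ * Y ^ (N₁ + N₂ - d)) := by
          rw [Finset.sum_const, Finset.Nat.card_antidiagonal, nsmul_eq_mul]
      _ ≤ ((N₁ + N₂ + 1 : ℕ) : ℝ) * (C₁ * C₂ * Y ^ (N₁ + N₂ - d)) := by
          apply mul_le_mul_of_nonneg_right _ (by positivity)
          exact_mod_cast by omega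
      _ = ((N₁ + N₂ + 1 : ℕ) : ℝ) * (C₁ * C₂) * Y ^ (N₁ + N₂ - d) := by ring

lemma hb_smul {C Y : ℝ} {N s : ℕ} {f : K[X]} {a : K} (hY : 1 ≤ Y) (hC : 0 ≤ C)
    (h : HB C Y N f) (ha : house a ≤ Y ^ s) :
    HB C Y (N + s) (Polynomial.C a * f) := by
  have hY0 : (0:ℝ) ≤ Y := le_trans zero_le_one hY
  constructor
  · intro d hd
    rw [Polynomial.coeff_C_mul, h.1 d (by omega), mul_zero]
  · intro d hd
    rw [Polynomial.coeff_C_mul]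
    by_cases hdN : d ≤ N
    · calc house (a * f.coeff d) ≤ house a * house (f.coeff d) := house_mul_le _ _
        _ ≤ Y ^ s * (C * Y ^ (N - d)) :=
            mul_le_mul ha (h.2 d hdN) (house_nonneg _) (le_trans (house_nonneg a) ha)
        _ = C * Y ^ (s + (N - d)) := by rw [pow_add]; ring
        _ = C * Y ^ (N + s - d) := by rw [show N + s - d = s + (N - d) from by omega]
    · rw [h.1 d (by omega), mul_zero, house_zero]
      positivity

lemma hb_pow2 {K : Type*} [Field K] [NumberField K] (N : ℕ) (C : ℝ) (hC : 1 ≤ C) (m : ℕ) :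
    ∃ C' ≥ (1:ℝ), ∀ Y : ℝ, 1 ≤ Y → ∀ f : K[X], HB C Y N f → HB C' Y (m * N) (f ^ m) := by
  induction m with
  | zero => exact ⟨1, le_rfl, fun Y hY f _ => by simpa using hb_one⟩
  | succ m ih =>
    obtain ⟨Cm, hCm, H⟩ := ih
    refine ⟨((m * N + N + 1 : ℕ) : ℝ) * (Cm * C), ?_, fun Y hY f hf => ?_⟩
    · have h1 : (1:ℝ) ≤ ((m * N + N + 1 : ℕ) : ℝ) := by exact_mod_cast Nat.one_le_iff_ne_zero.mpr (by omega)
      have h2 : (1:ℝ) ≤ Cm * C := by nlinarith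
      nlinarith
    · have := hb_mul hY (by linarith) (by linarith) (H Y hY f hf) hf
      rw [pow_succ, show (m + 1) * N = m * N + N from by ring]
      exact this
end HB

section Struct
set_option linter.unusedSectionVars false

variable (K : Type*) [Field K] [NumberField K]
open Polynomial Finset

lemma wreathDeg_zero (n : ℕ → ℕ) : wreathDeg n 0 = 1 := by
  simp [wreathDeg]

lemma wreathDeg_succ (n : ℕ → ℕ) (j : ℕ) :
    wreathDeg n (j + 1) = n (j + 1) * wreathDeg n j := by
  rw [wreathDeg, wreathDeg, Finset.prod_Icc_succ_top (by omega), mul_comm]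

lemma wreathDeg_pos {k : ℕ} {n : ℕ → ℕ} (hn : ∀ i ∈ Finset.Icc 1 k, 2 ≤ n i) {j : ℕ}
    (hj : j ≤ k) : 0 < wreathDeg n j := by
  apply Finset.prod_pos
  intro v hv
  have := hn v (Finset.mem_Icc.mpr ⟨(Finset.mem_Icc.mp hv).1, le_trans (Finset.mem_Icc.mp hv).2 hj⟩)
  omega

lemma degree_wreathGen_sum_lt (n : ℕ → ℕ) (u : ℕ) (hu : 1 ≤ n u) :
    (∑ v ∈ Finset.Icc 1 (n u),
        Polynomial.C (MvPolynomial.X (u, v) : WreathCompRing K) * Polynomial.X ^ (n u - v)).degree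
      < (n u : WithBot ℕ) := by
  apply lt_of_le_of_lt (Polynomial.degree_sum_le _ _)
  rw [Finset.sup_lt_iff (by exact_mod_cast WithBot.bot_lt_coe (n u))]
  intro v hv
  apply lt_of_le_of_lt (Polynomial.degree_C_mul_X_pow_le _ _)
  exact_mod_cast Nat.sub_lt (by omega) (Finset.mem_Icc.mp hv).1

lemma wreathGen_monic (n : ℕ → ℕ) (u : ℕ) (hu : 1 ≤ n u) : (wreathGen K n u).Monic :=
  Polynomial.monic_X_pow_add (degree_wreathGen_sum_lt K n u hu)

lemma wreathGen_natDegree (n : ℕ → ℕ) (u : ℕ) (hu : 1 ≤ n u) :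
    (wreathGen K n u).natDegree = n u := by
  rw [wreathGen, Polynomial.natDegree_add_eq_left_of_degree_lt, Polynomial.natDegree_X_pow]
  rw [Polynomial.degree_X_pow]
  exact degree_wreathGen_sum_lt K n u hu

lemma wreathComp_monic {k : ℕ} (n : ℕ → ℕ) (hn : ∀ i ∈ Finset.Icc 1 k, 2 ≤ n i) :
    ∀ j ≤ k, (wreathComp K n j).Monic ∧ (wreathComp K n j).natDegree = wreathDeg n j := by
  intro j
  induction j with
  | zero =>
    intro _
    refine ⟨Polynomial.monic_X, ?_⟩
    show (Polynomial.X : Polynomial (WreathCompRing K)).natDegree = wreathDeg n 0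
    rw [Polynomial.natDegree_X, wreathDeg_zero]
  | succ j ih =>
    intro hjk
    obtain ⟨hm, hd⟩ := ih (by omega)
    have hnu : 1 ≤ n (j + 1) := by
      have := hn (j + 1) (Finset.mem_Icc.mpr ⟨by omega, hjk⟩)
      omega
    have hdeg0 : (wreathComp K n j).natDegree ≠ 0 := by
      rw [hd]
      exact (wreathDeg_pos hn (by omega)).ne'
    constructor
    · exact (wreathGen_monic K n (j + 1) hnu).comp hm hdeg0
    · rw [wreathComp, Polynomial.natDegree_comp, wreathGen_natDegree K n (j + 1) hnu, hd,
        wreathDeg_succ]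

lemma wreathSpecK_monic {k : ℕ} (n : ℕ → ℕ) (hn : ∀ i ∈ Finset.Icc 1 k, 2 ≤ n i)
    (α : ℕ × ℕ → 𝓞 K) {j : ℕ} (hj : j ≤ k) :
    (wreathSpecK K n α j).Monic ∧ (wreathSpecK K n α j).natDegree = wreathDeg n j := by
  obtain ⟨hm, hd⟩ := wreathComp_monic K n hn j hj
  have h1 : (wreathSpec K n α j).Monic := hm.map _
  refine ⟨h1.map _, ?_⟩
  rw [wreathSpecK, h1.natDegree_map, wreathSpec, hm.natDegree_map, hd]

lemma wreathSpecK_zero (n : ℕ → ℕ) (α : ℕ × ℕ → 𝓞 K) :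
    wreathSpecK K n α 0 = Polynomial.X := by
  simp [wreathSpecK, wreathSpec, wreathComp]

lemma wreathSpecK_succ (n : ℕ → ℕ) (α : ℕ × ℕ → 𝓞 K) (j : ℕ) :
    wreathSpecK K n α (j + 1) = (wreathSpecK K n α j) ^ (n (j + 1)) +
      ∑ v ∈ Finset.Icc 1 (n (j + 1)),
        Polynomial.C ((α ((j + 1), v) : K)) * (wreathSpecK K n α j) ^ (n (j + 1) - v) := by
  simp only [wreathSpecK, wreathSpec, wreathComp, wreathGen, Polynomial.map_comp,
    Polynomial.map_add, Polynomial.map_sum, Polynomial.map_mul, Polynomial.map_pow,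
    Polynomial.map_C, Polynomial.map_X, Polynomial.add_comp, Polynomial.sum_comp,
    Polynomial.mul_comp, Polynomial.pow_comp, Polynomial.X_comp, Polynomial.C_comp,
    MvPolynomial.eval_X]

end Struct

section MainAux

variable {K : Type*} [Field K] [NumberField K]
open NumberField

lemma wreath_HB (k : ℕ) (n : ℕ → ℕ) (hn : ∀ i ∈ Finset.Icc 1 k, 2 ≤ n i) (j : ℕ) :
    ∃ C ≥ (1:ℝ), j ≤ k → ∀ Y : ℝ, 1 ≤ Y → ∀ α ∈ wreathBox K k n Y,
      HB C Y (wreathDeg n j) (wreathSpecK K n α j) := by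
  induction j with
  | zero =>
    refine ⟨1, le_rfl, fun _ Y hY α _ => ?_⟩
    rw [wreathSpecK_zero, wreathDeg_zero]
    constructor
    · intro d hd
      rw [Polynomial.coeff_X, if_neg (by omega)]
    · intro d hd
      interval_cases d
      · rw [Polynomial.coeff_X_zero, house_zero]
        positivity
      · rw [Polynomial.coeff_X_one, house_one]
        simp
  | succ j ih =>
    obtain ⟨C, hC, H⟩ := ih
    choose Cp hCp1 hCp2 using fun m => hb_pow2 (K := K) (wreathDeg n j) C hC m
    set n' := n (j + 1)
    refine ⟨Cp n' + ∑ v ∈ Finset.Icc 1 n', Cp (n' - v), ?_, fun hjk Y hY α hα => ?_⟩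
    · have h0 : (0:ℝ) ≤ ∑ v ∈ Finset.Icc 1 n', Cp (n' - v) :=
        Finset.sum_nonneg fun v _ => le_trans zero_le_one (hCp1 _)
      linarith [hCp1 n']
    · have hj : j ≤ k := by omega
      have hf := H hj Y hY α hα
      rw [wreathSpecK_succ, wreathDeg_succ]
      refine hb_add ?_ ?_
      · exact hCp2 n' Y hY _ hf
      · refine hb_sum _ _ _ fun v hv => ?_
        obtain ⟨hv1, hv2⟩ := Finset.mem_Icc.mp hv
        have hbox : house ((α ((j + 1), v) : K)) ≤ Y ^ (v * wreathDeg n j) := by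
          have := hα.1 (j + 1) (Finset.mem_Icc.mpr ⟨by omega, hjk⟩) v hv
          rwa [algHouse_eq_house, show j + 1 - 1 = j from rfl] at this
        have hpow := hCp2 (n' - v) Y hY _ hf
        have := hb_smul hY (le_trans zero_le_one (hCp1 (n' - v))) hpow hbox
        rwa [show (n' - v) * wreathDeg n j + v * wreathDeg n j = n' * wreathDeg n j from by
          rw [← add_mul, Nat.sub_add_cancel hv2]] at this

end MainAux

open NumberField in
/-- There is a constant `C₁ > 0` (depending only on `K` and `n⃗`) with
`‖F_{j,α}‖ ≤ C₁·Y` for all `Y ≥ 1`, all `α ∈ 𝔛(O_K;Y)` and all `j ∈ [1,k]`. -/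
theorem wreath_spec_height_bound (K : Type*) [Field K] [NumberField K] (k : ℕ) (hk : 2 ≤ k)
    (n : ℕ → ℕ) (hn : ∀ i ∈ Finset.Icc 1 k, 2 ≤ n i) :
    ∃ C₁ > (0 : ℝ), ∀ Y : ℝ, 1 ≤ Y → ∀ α ∈ wreathBox K k n Y, ∀ j ∈ Finset.Icc 1 k,
      polyHouse (wreathSpecK K n α j) ≤ C₁ * Y := by

  choose g hg1 hg2 using wreath_HB (K := K) k n hn
  set C₁ : ℝ := ∑ j ∈ Finset.range (k + 1), g j with hC₁
  have hgle : ∀ j ≤ k, g j ≤ C₁ :=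
    fun j hj => Finset.single_le_sum (f := g)
      (fun i _ => le_trans zero_le_one (hg1 i)) (Finset.mem_range.mpr (by omega))
  have hC₁1 : (1:ℝ) ≤ C₁ := le_trans (hg1 0) (hgle 0 (by omega))
  refine ⟨C₁, by linarith, fun Y hY α hα j hj => ?_⟩
  obtain ⟨hj1, hjk⟩ := Finset.mem_Icc.mp hj
  have hY0 : (0:ℝ) ≤ Y := by linarith
  have hHB : HB C₁ Y (wreathDeg n j) (wreathSpecK K n α j) :=
    (hg2 j hjk Y hY α hα).mono (hgle j hjk) hY0
  have hND : (wreathSpecK K n α j).natDegree = wreathDeg n j :=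
    (wreathSpecK_monic K n hn α hjk).2
  set N := wreathDeg n j
  set f := wreathSpecK K n α j
  rw [polyHouse]
  apply Real.sSup_le _ (by positivity)
  rintro r ⟨i, hi, rfl⟩
  rw [hND] at hi ⊢
  obtain ⟨hi1, hi2⟩ := Finset.mem_Icc.mp hi
  have hi0 : ((i : ℝ)) ≠ 0 := by positivity
  have hc : house (f.coeff (N - i)) ≤ C₁ * Y ^ i := by
    have := hHB.2 (N - i) (Nat.sub_le _ _)
    rwa [show N - (N - i) = i from by omega] at this
  rw [algHouse_eq_house]
  calc house (f.coeff (N - i)) ^ ((i : ℝ)⁻¹)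
      ≤ (C₁ * Y ^ i) ^ ((i : ℝ)⁻¹) :=
        Real.rpow_le_rpow (house_nonneg _) hc (by positivity)
    _ ≤ ((C₁ * Y) ^ i) ^ ((i : ℝ)⁻¹) := by
        apply Real.rpow_le_rpow (by positivity) _ (by positivity)
        rw [mul_pow]
        exact mul_le_mul_of_nonneg_right (le_self_pow₀ hC₁1 (by omega)) (by positivity)
    _ = C₁ * Y := by
        rw [← Real.rpow_natCast (C₁ * Y) i, ← Real.rpow_mul (by positivity),
          mul_inv_cancel₀ hi0, Real.rpow_one]
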